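/- Let T > 0, m ≥ 1 an integer, H a real Hilbert space, K : L²((0,T);ℝ^m) × ℝ^m → H a continuous linear map with Hilbert-space adjoint K*, y_d ∈ H, α₁,…,α_m > 0, γ > 0 and κ ≥ 0. A pair (v̄,c̄) ∈ L²((0,T);ℝ^m) × ℝ^m minimizes J̃_γ(v,c) := (1/2)‖K(v,c) − y_d‖²_H + Σ_{i=1}^m αᵢ‖vᵢ‖_{L¹(0,T)} + (γ/2)Σ_{i=1}^m‖vᵢ‖²_{L²(0,T)} + (κ/2)‖c‖²_{ℝ^m} over L²((0,T);ℝ^m) × ℝ^m if and only if, writing (𝔭,q) := K*(K(v̄,c̄) − y_d) ∈ L²((0,T);ℝ^m) × ℝ^m, one has: (1) for each i = 1,…,m, v̄ᵢ(s) = max(0, −(1/γ)𝔭ᵢ(s) − αᵢ/γ) + min(0, −(1/γ)𝔭ᵢ(s) + αᵢ/γ) for almost every s ∈ (0,T), and (2) q + κ·c̄ = 0 in ℝ^m. -/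

import Mathlib

open MeasureTheory RealInnerProductSpace

/-!
Write the cost as `½‖K z − y_d‖² + g z` with `g` convex. Then `z̄` minimizes it iff `z̄` minimizes
the linearization `z ↦ ⟪K z, K z̄ − y_d⟫ + g z`: one direction is the expansion of the square, the
other compares `z̄` with `z̄ + t (z − z̄)` and lets `t → 0⁺`, using convexity of `g`. Through the
adjoint, the linearized problem decouples into a problem in `v` and one in `c`. The `v`-problem is
an integral of `x ↦ ⟪x, 𝔭(s)⟫ + Σ αᵢ |xᵢ| + γ/2 ‖x‖²`, minimized pointwise by the soft threshold
`S(𝔭(s))` with quadratic growth `γ/2 ‖x − S(𝔭(s))‖²`; this growth forces every minimizer to agree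
a.e. with `S ∘ 𝔭`. The `c`-problem is the quadratic `⟪c, q⟫ + κ/2 ‖c‖²`, minimized exactly where
`q + κ c = 0`.
-/

/-- The regularized cost functional `J̃_γ` of problem (P̃_γ). -/
noncomputable def regCost (T : ℝ) (m : ℕ) {H : Type*} [NormedAddCommGroup H]
    [InnerProductSpace ℝ H]
    (K : (Lp (EuclideanSpace ℝ (Fin m)) 2 (volume.restrict (Set.Ioo 0 T)) ×
      EuclideanSpace ℝ (Fin m)) →L[ℝ] H)
    (yd : H) (α : Fin m → ℝ) (γ κ : ℝ)
    (z : Lp (EuclideanSpace ℝ (Fin m)) 2 (volume.restrict (Set.Ioo 0 T)) ×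
      EuclideanSpace ℝ (Fin m)) : ℝ :=
  (1 / 2) * ‖K z - yd‖ ^ 2
    + ∑ i, α i * ∫ t, |z.1 t i| ∂(volume.restrict (Set.Ioo 0 T))
    + (γ / 2) * ∑ i, ∫ t, (z.1 t i) ^ 2 ∂(volume.restrict (Set.Ioo 0 T))
    + (κ / 2) * ‖z.2‖ ^ 2

theorem nonneg_of_forall_mul_add_sq_mul_nonneg {A B : ℝ}
    (h : ∀ t : ℝ, 0 < t → t ≤ 1 → 0 ≤ t * A + t ^ 2 * B) : 0 ≤ A := by
  have hcont : Continuous fun t : ℝ => A + t * B := by fun_prop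
  have hlim : Filter.Tendsto (fun t => A + t * B) (nhdsWithin 0 (Set.Ioi 0)) (nhds A) := by
    simpa using (hcont.tendsto 0).mono_left nhdsWithin_le_nhds
  refine ge_of_tendsto hlim ?_
  filter_upwards [Ioc_mem_nhdsGT one_pos] with t ⟨ht0, ht1⟩
  exact nonneg_of_mul_nonneg_right (by linarith [h t ht0 ht1]) ht0

theorem forall_half_norm_sub_sq_add_le_iff {E H : Type*} [AddCommGroup E] [Module ℝ E]
    [NormedAddCommGroup H] [InnerProductSpace ℝ H] (K : E →ₗ[ℝ] H) (y : H) {g : E → ℝ}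
    (hg : ConvexOn ℝ Set.univ g) (z₀ : E) :
    (∀ z, 1 / 2 * ‖K z₀ - y‖ ^ 2 + g z₀ ≤ 1 / 2 * ‖K z - y‖ ^ 2 + g z) ↔
      ∀ z, ⟪K z₀, K z₀ - y⟫ + g z₀ ≤ ⟪K z, K z₀ - y⟫ + g z := by
  have expand : ∀ d, 1 / 2 * ‖K (z₀ + d) - y‖ ^ 2
      = 1 / 2 * ‖K z₀ - y‖ ^ 2 + ⟪K d, K z₀ - y⟫ + 1 / 2 * ‖K d‖ ^ 2 := by
    intro d
    rw [map_add, show K z₀ + K d - y = (K z₀ - y) + K d by abel, norm_add_sq_real,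
      real_inner_comm]
    ring
  constructor
  · intro hmin z
    suffices 0 ≤ ⟪K (z - z₀), K z₀ - y⟫ + (g z - g z₀) by
      rw [map_sub, inner_sub_left] at this
      linarith
    refine nonneg_of_forall_mul_add_sq_mul_nonneg (B := 1 / 2 * ‖K (z - z₀)‖ ^ 2)
      fun t ht0 ht1 => ?_
    have hconv : g (z₀ + t • (z - z₀)) ≤ (1 - t) * g z₀ + t * g z := by
      have := hg.2 (Set.mem_univ z₀) (Set.mem_univ z) (sub_nonneg.2 ht1) ht0.le (sub_add_cancel 1 t)
      rwa [show (1 - t) • z₀ + t • z = z₀ + t • (z - z₀) by module] at this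
    have := hmin (z₀ + t • (z - z₀))
    rw [expand, map_smul, real_inner_smul_left, norm_smul, Real.norm_of_nonneg ht0.le] at this
    nlinarith
  · intro hlin z
    have := expand (z - z₀)
    rw [add_sub_cancel, map_sub, inner_sub_left] at this
    nlinarith [hlin z, sq_nonneg ‖K (z - z₀)‖]

theorem forall_add_le_add_prod_iff {A B β : Type*} [AddCommMonoid β] [PartialOrder β]
    [IsOrderedCancelAddMonoid β] (f : A → β) (g : B → β) (a₀ : A) (b₀ : B) :
    (∀ w : A × B, f a₀ + g b₀ ≤ f w.1 + g w.2) ↔ (∀ a, f a₀ ≤ f a) ∧ ∀ b, g b₀ ≤ g b :=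
  ⟨fun h => ⟨fun a => le_of_add_le_add_right (h (a, b₀)),
      fun b => le_of_add_le_add_left (h (a₀, b))⟩,
    fun h w => add_le_add (h.1 w.1) (h.2 w.2)⟩

theorem forall_inner_add_norm_sq_le_iff {F : Type*} [NormedAddCommGroup F]
    [InnerProductSpace ℝ F] {κ : ℝ} (hκ : 0 ≤ κ) (u c : F) :
    (∀ x, ⟪c, u⟫ + κ / 2 * ‖c‖ ^ 2 ≤ ⟪x, u⟫ + κ / 2 * ‖x‖ ^ 2) ↔ u + κ • c = 0 := by
  have expand : ∀ d, ⟪c + d, u⟫ + κ / 2 * ‖c + d‖ ^ 2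
      = ⟪c, u⟫ + κ / 2 * ‖c‖ ^ 2 + ⟪d, u + κ • c⟫ + κ / 2 * ‖d‖ ^ 2 := by
    intro d
    rw [norm_add_sq_real, inner_add_left, inner_add_right, real_inner_smul_right,
      real_inner_comm c d]
    ring
  constructor
  · intro hmin
    set w := u + κ • c
    suffices 0 ≤ -‖w‖ ^ 2 by simpa using this
    refine nonneg_of_forall_mul_add_sq_mul_nonneg (B := κ / 2 * ‖w‖ ^ 2) fun t ht0 _ => ?_
    have := hmin (c + (-t) • w)
    rw [expand, real_inner_smul_left, real_inner_self_eq_norm_sq, norm_smul, Real.norm_eq_abs,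
      abs_neg, abs_of_pos ht0] at this
    nlinarith
  · intro h x
    have := expand (x - c)
    rw [add_sub_cancel, h, inner_zero_right] at this
    nlinarith [sq_nonneg ‖x - c‖]

noncomputable def softThreshold (γ a p : ℝ) : ℝ :=
  max 0 (-(1 / γ) * p - a / γ) + min 0 (-(1 / γ) * p + a / γ)

section SoftThreshold

variable {γ a : ℝ}

theorem softThreshold_cases (hγ : 0 < γ) (ha : 0 ≤ a) (p : ℝ) :
    (γ * softThreshold γ a p = -(p + a) ∧ 0 ≤ softThreshold γ a p) ∨
      (γ * softThreshold γ a p = a - p ∧ softThreshold γ a p ≤ 0) ∨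
      (|p| ≤ a ∧ softThreshold γ a p = 0) := by
  have hlo : -(1 / γ) * p - a / γ = -(p + a) / γ := by ring
  have hhi : -(1 / γ) * p + a / γ = (a - p) / γ := by ring
  rw [softThreshold, hlo, hhi]
  rcases le_or_gt p (-a) with hp | hp
  · have hnonneg : 0 ≤ -(p + a) / γ := div_nonneg (by linarith) hγ.le
    rw [max_eq_right hnonneg, min_eq_left (div_nonneg (by linarith) hγ.le), add_zero]
    exact Or.inl ⟨by field_simp, hnonneg⟩
  rcases le_or_gt a p with hp' | hp'
  · have hnonpos : (a - p) / γ ≤ 0 := div_nonpos_of_nonpos_of_nonneg (by linarith) hγ.le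
    rw [max_eq_left (div_nonpos_of_nonpos_of_nonneg (by linarith) hγ.le), min_eq_right hnonpos,
      zero_add]
    exact Or.inr (Or.inl ⟨by field_simp, hnonpos⟩)
  · rw [max_eq_left (div_nonpos_of_nonpos_of_nonneg (by linarith) hγ.le),
      min_eq_left (div_nonneg (by linarith) hγ.le), add_zero]
    exact Or.inr (Or.inr ⟨abs_le.2 ⟨hp.le, hp'.le⟩, rfl⟩)

theorem mul_abs_softThreshold_le (hγ : 0 < γ) (ha : 0 ≤ a) (p : ℝ) :
    γ * |softThreshold γ a p| ≤ |p| := by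
  rcases softThreshold_cases hγ ha p with ⟨hs, hs0⟩ | ⟨hs, hs0⟩ | ⟨-, hs⟩
  · rw [abs_of_nonneg hs0, hs]
    linarith [neg_le_abs p]
  · rw [abs_of_nonpos hs0, mul_neg, hs]
    linarith [le_abs_self p]
  · simp [hs]

theorem softThreshold_quadratic_growth (hγ : 0 < γ) (ha : 0 ≤ a) (p x : ℝ) :
    p * softThreshold γ a p + a * |softThreshold γ a p| + γ / 2 * softThreshold γ a p ^ 2
        + γ / 2 * (x - softThreshold γ a p) ^ 2
      ≤ p * x + a * |x| + γ / 2 * x ^ 2 := by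
  set s := softThreshold γ a p
  suffices 0 ≤ (p + γ * s) * (x - s) + a * (|x| - |s|) by linarith
  rcases softThreshold_cases hγ ha p with ⟨hs, hs0⟩ | ⟨hs, hs0⟩ | ⟨hp, hs⟩
  · rw [abs_of_nonneg hs0, show p + γ * s = -a by linarith]
    nlinarith [le_abs_self x]
  · rw [abs_of_nonpos hs0, show p + γ * s = a by linarith]
    nlinarith [neg_le_abs x]
  · rw [show s = 0 from hs, abs_zero]
    nlinarith [neg_abs_le (p * x), abs_mul p x, abs_nonneg x]

end SoftThreshold

section Euclidean

variable {ι : Type*} [Fintype ι]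

theorem EuclideanSpace.norm_le_norm_of_forall_abs_le {x y : EuclideanSpace ℝ ι}
    (h : ∀ i, |x i| ≤ |y i|) : ‖x‖ ≤ ‖y‖ := by
  rw [EuclideanSpace.norm_eq, EuclideanSpace.norm_eq]
  gcongr with i
  simpa only [Real.norm_eq_abs] using h i

noncomputable def proxIntegrand (γ : ℝ) (α : ι → ℝ) (q x : EuclideanSpace ℝ ι) : ℝ :=
  ⟪x, q⟫ + ∑ i, α i * |x i| + γ / 2 * ‖x‖ ^ 2

theorem proxIntegrand_add_le {γ : ℝ} (hγ : 0 < γ) {α : ι → ℝ} (hα : ∀ i, 0 ≤ α i)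
    {q y : EuclideanSpace ℝ ι} (hy : ∀ i, y i = softThreshold γ (α i) (q i))
    (x : EuclideanSpace ℝ ι) :
    proxIntegrand γ α q y + γ / 2 * ‖x - y‖ ^ 2 ≤ proxIntegrand γ α q x := by
  simp only [proxIntegrand, PiLp.inner_apply, EuclideanSpace.norm_sq_eq, Finset.mul_sum,
    ← Finset.sum_add_distrib]
  refine Finset.sum_le_sum fun i _ => ?_
  simp only [PiLp.sub_apply, Real.norm_eq_abs, sq_abs, Real.inner_apply, hy i]
  nlinarith [softThreshold_quadratic_growth hγ (hα i) (q i) (x i)]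

end Euclidean

section L2

variable {X : Type*} [MeasurableSpace X] {μ : Measure X}

theorem MeasureTheory.L2.norm_sq_eq_integral_norm_sq {E : Type*} [NormedAddCommGroup E]
    [InnerProductSpace ℝ E] (v : Lp E 2 μ) : ‖v‖ ^ 2 = ∫ t, ‖v t‖ ^ 2 ∂μ := by
  simp only [← real_inner_self_eq_norm_sq, L2.inner_def]

theorem MeasureTheory.Lp.integrable_norm_sq {E : Type*} [NormedAddCommGroup E] (v : Lp E 2 μ) :
    Integrable (fun t => ‖v t‖ ^ 2) μ :=
  (memLp_two_iff_integrable_sq_norm (Lp.aestronglyMeasurable v)).1 (Lp.memLp v)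

variable {ι : Type*} [Fintype ι]

theorem sum_integral_sq_apply_eq_norm_sq (v : Lp (EuclideanSpace ℝ ι) 2 μ) :
    ∑ i, ∫ t, (v t i) ^ 2 ∂μ = ‖v‖ ^ 2 := by
  have hsq : ∀ i, Integrable (fun t => (v t i) ^ 2) μ := fun i =>
    ((Lp.memLp v).continuousLinearMap_comp (EuclideanSpace.proj (𝕜 := ℝ) i)).integrable_sq
  rw [L2.norm_sq_eq_integral_norm_sq, ← integral_finsetSum _ fun i _ => hsq i]
  simp only [EuclideanSpace.norm_sq_eq, Real.norm_eq_abs, sq_abs]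

theorem exists_ae_eq_softThreshold {γ : ℝ} {α : ι → ℝ} (hγ : 0 < γ) (hα : ∀ i, 0 ≤ α i)
    (p : Lp (EuclideanSpace ℝ ι) 2 μ) :
    ∃ v : Lp (EuclideanSpace ℝ ι) 2 μ, ∀ᵐ t ∂μ, ∀ i, v t i = softThreshold γ (α i) (p t i) := by
  set S : EuclideanSpace ℝ ι → EuclideanSpace ℝ ι :=
    fun q => WithLp.toLp 2 fun i => softThreshold γ (α i) (q i)
  have hS : Continuous S := by
    refine (PiLp.continuous_toLp 2 _).comp (continuous_pi fun i => ?_)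
    simp only [softThreshold]
    fun_prop
  have hbound : ∀ q, ‖S q‖ ≤ γ⁻¹ * ‖q‖ := by
    intro q
    rw [← Real.norm_of_nonneg (inv_nonneg.2 hγ.le), ← norm_smul]
    refine EuclideanSpace.norm_le_norm_of_forall_abs_le fun i => ?_
    rw [PiLp.smul_apply, smul_eq_mul, abs_mul, abs_of_pos (inv_pos.2 hγ), le_inv_mul_iff₀ hγ]
    exact mul_abs_softThreshold_le hγ (hα i) (q i)
  have hmem : MemLp (fun t => S (p t)) 2 μ :=
    (Lp.memLp p).of_le_mul (hS.comp_aestronglyMeasurable (Lp.aestronglyMeasurable p))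
      (Filter.Eventually.of_forall fun t => hbound (p t))
  exact ⟨hmem.toLp _, by filter_upwards [hmem.coeFn_toLp] with t ht i using by rw [ht]⟩

variable [IsFiniteMeasure μ]

theorem integrable_abs_apply (v : Lp (EuclideanSpace ℝ ι) 2 μ) (i : ι) :
    Integrable (fun t => |v t i|) μ :=
  ((EuclideanSpace.proj (𝕜 := ℝ) i).integrable_comp ((Lp.memLp v).integrable one_le_two)).abs

theorem convexOn_integral_abs_apply (i : ι) :
    ConvexOn ℝ Set.univ fun v : Lp (EuclideanSpace ℝ ι) 2 μ => ∫ t, |v t i| ∂μ := by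
  refine ⟨convex_univ, fun v _ w _ a b ha hb _ => ?_⟩
  have hv := (integrable_abs_apply v i).const_mul a
  have hw := (integrable_abs_apply w i).const_mul b
  simp only [smul_eq_mul]
  rw [← integral_const_mul, ← integral_const_mul, ← integral_add hv hw]
  refine integral_mono_ae (integrable_abs_apply _ i) (hv.add hw) ?_
  filter_upwards [Lp.coeFn_add (a • v) (b • w), Lp.coeFn_smul a v, Lp.coeFn_smul b w]
    with t hsum hv hw
  simp only [hsum, hv, hw, Pi.add_apply, Pi.smul_apply, PiLp.add_apply, PiLp.smul_apply,
    smul_eq_mul]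
  calc |a * v t i + b * w t i| ≤ |a * v t i| + |b * w t i| := abs_add_le _ _
    _ = a * |v t i| + b * |w t i| := by rw [abs_mul, abs_mul, abs_of_nonneg ha, abs_of_nonneg hb]

noncomputable def proxObjective (γ : ℝ) (α : ι → ℝ) (p v : Lp (EuclideanSpace ℝ ι) 2 μ) : ℝ :=
  ⟪v, p⟫ + ∑ i, α i * ∫ t, |v t i| ∂μ + γ / 2 * ‖v‖ ^ 2

theorem integrable_proxIntegrand (γ : ℝ) (α : ι → ℝ) (p v : Lp (EuclideanSpace ℝ ι) 2 μ) :
    Integrable (fun t => proxIntegrand γ α (p t) (v t)) μ :=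
  ((L2.integrable_inner v p).add (integrable_finsetSum _ fun i _ =>
    (integrable_abs_apply v i).const_mul (α i))).add
    ((Lp.integrable_norm_sq v).const_mul _)

theorem proxObjective_eq_integral (γ : ℝ) (α : ι → ℝ) (p v : Lp (EuclideanSpace ℝ ι) 2 μ) :
    proxObjective γ α p v = ∫ t, proxIntegrand γ α (p t) (v t) ∂μ := by
  have hl1 : Integrable (fun t => ∑ i, α i * |v t i|) μ :=
    integrable_finsetSum _ fun i _ => (integrable_abs_apply v i).const_mul (α i)
  have hl01 : Integrable (fun t => ⟪v t, p t⟫ + ∑ i, α i * |v t i|) μ :=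
    (L2.integrable_inner v p).add hl1
  simp only [proxObjective, proxIntegrand, L2.inner_def, L2.norm_sq_eq_integral_norm_sq,
    ← integral_const_mul]
  rw [← integral_finsetSum _ fun i _ => (integrable_abs_apply v i).const_mul (α i),
    ← integral_add (L2.integrable_inner v p) hl1,
    ← integral_add hl01 ((Lp.integrable_norm_sq v).const_mul _)]

theorem proxObjective_add_le {γ : ℝ} {α : ι → ℝ} (hγ : 0 < γ) (hα : ∀ i, 0 ≤ α i)
    {p v₀ : Lp (EuclideanSpace ℝ ι) 2 μ}
    (hv₀ : ∀ᵐ t ∂μ, ∀ i, v₀ t i = softThreshold γ (α i) (p t i))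
    (v : Lp (EuclideanSpace ℝ ι) 2 μ) :
    proxObjective γ α p v₀ + γ / 2 * ‖v - v₀‖ ^ 2 ≤ proxObjective γ α p v := by
  have hsq := (Lp.integrable_norm_sq (v - v₀)).const_mul (γ / 2)
  rw [proxObjective_eq_integral, proxObjective_eq_integral, L2.norm_sq_eq_integral_norm_sq,
    ← integral_const_mul, ← integral_add (integrable_proxIntegrand γ α p v₀) hsq]
  refine integral_mono_ae ((integrable_proxIntegrand γ α p v₀).add hsq)
    (integrable_proxIntegrand γ α p v) ?_
  filter_upwards [hv₀, Lp.coeFn_sub v v₀] with t ht hsub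
  simpa only [hsub, Pi.sub_apply] using proxIntegrand_add_le hγ hα ht (v t)

theorem forall_proxObjective_le_iff {γ : ℝ} {α : ι → ℝ} (hγ : 0 < γ) (hα : ∀ i, 0 ≤ α i)
    (p v₀ : Lp (EuclideanSpace ℝ ι) 2 μ) :
    (∀ v, proxObjective γ α p v₀ ≤ proxObjective γ α p v) ↔
      ∀ᵐ t ∂μ, ∀ i, v₀ t i = softThreshold γ (α i) (p t i) := by
  constructor
  · intro hmin
    obtain ⟨v, hv⟩ := exists_ae_eq_softThreshold hγ hα p
    have hgrowth := proxObjective_add_le hγ hα hv v₀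
    have hdist : ‖v₀ - v‖ ^ 2 = 0 := le_antisymm (by nlinarith [hmin v]) (sq_nonneg _)
    rw [pow_eq_zero_iff two_ne_zero, norm_eq_zero, sub_eq_zero] at hdist
    rwa [hdist]
  · intro hv₀ v
    nlinarith [proxObjective_add_le hγ hα hv₀ v, sq_nonneg ‖v - v₀‖]

end L2

theorem ConvexOn.finset_sum {E ι : Type*} [AddCommGroup E] [Module ℝ E] {s : Set E}
    (hs : Convex ℝ s) (t : Finset ι) {f : ι → E → ℝ} (hf : ∀ i ∈ t, ConvexOn ℝ s (f i)) :
    ConvexOn ℝ s fun x => ∑ i ∈ t, f i x := by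
  simpa only [← Finset.sum_apply] using
    Finset.sum_induction f (ConvexOn ℝ s) (fun _ _ => ConvexOn.add) (convexOn_const 0 hs) hf

theorem convexOn_univ_norm_sq {F : Type*} [SeminormedAddCommGroup F] [NormedSpace ℝ F] :
    ConvexOn ℝ Set.univ fun x : F => ‖x‖ ^ 2 :=
  (convexOn_norm convex_univ).pow (fun _ _ => norm_nonneg _) 2

section Regularizer

variable {X : Type*} [MeasurableSpace X] {μ : Measure X} {ι : Type*} [Fintype ι]

noncomputable def regularizer (α : ι → ℝ) (γ κ : ℝ)
    (z : Lp (EuclideanSpace ℝ ι) 2 μ × EuclideanSpace ℝ ι) : ℝ :=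
  ∑ i, α i * ∫ t, |z.1 t i| ∂μ + γ / 2 * ‖z.1‖ ^ 2 + κ / 2 * ‖z.2‖ ^ 2

theorem convexOn_regularizer [IsFiniteMeasure μ] {α : ι → ℝ} {γ κ : ℝ} (hα : ∀ i, 0 ≤ α i)
    (hγ : 0 ≤ γ) (hκ : 0 ≤ κ) :
    ConvexOn ℝ Set.univ (regularizer (μ := μ) α γ κ) := by
  have hl1 := ConvexOn.finset_sum convex_univ Finset.univ fun i _ =>
    (convexOn_integral_abs_apply (μ := μ) i).smul (hα i)
  exact ((hl1.comp_linearMap (LinearMap.fst ℝ _ _)).add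
    ((convexOn_univ_norm_sq.smul (div_nonneg hγ zero_le_two)).comp_linearMap
      (LinearMap.fst ℝ _ _))).add
    ((convexOn_univ_norm_sq.smul (div_nonneg hκ zero_le_two)).comp_linearMap
      (LinearMap.snd ℝ _ _))

end Regularizer

theorem regCost_eq (T : ℝ) (m : ℕ) {H : Type*} [NormedAddCommGroup H] [InnerProductSpace ℝ H]
    (K : (Lp (EuclideanSpace ℝ (Fin m)) 2 (volume.restrict (Set.Ioo 0 T)) ×
      EuclideanSpace ℝ (Fin m)) →L[ℝ] H)
    (yd : H) (α : Fin m → ℝ) (γ κ : ℝ)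
    (z : Lp (EuclideanSpace ℝ (Fin m)) 2 (volume.restrict (Set.Ioo 0 T)) ×
      EuclideanSpace ℝ (Fin m)) :
    regCost T m K yd α γ κ z = 1 / 2 * ‖K z - yd‖ ^ 2 + regularizer α γ κ z := by
  rw [regCost, regularizer, sum_integral_sq_apply_eq_norm_sq]
  ring

theorem regularized_first_order_conditions_general
    (T : ℝ) (m : ℕ)
    {H : Type*} [NormedAddCommGroup H] [InnerProductSpace ℝ H]
    (K : (Lp (EuclideanSpace ℝ (Fin m)) 2 (volume.restrict (Set.Ioo 0 T)) ×
      EuclideanSpace ℝ (Fin m)) →L[ℝ] H)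
    (Kstar : H →L[ℝ] (Lp (EuclideanSpace ℝ (Fin m)) 2 (volume.restrict (Set.Ioo 0 T)) ×
      EuclideanSpace ℝ (Fin m)))
    (hadj : ∀ z w, ⟪K z, w⟫ = ⟪z.1, (Kstar w).1⟫ + ⟪z.2, (Kstar w).2⟫)
    (yd : H) (α : Fin m → ℝ) (hα : ∀ i, 0 < α i)
    (γ κ : ℝ) (hγ : 0 < γ) (hκ : 0 ≤ κ)
    (vbar : Lp (EuclideanSpace ℝ (Fin m)) 2 (volume.restrict (Set.Ioo 0 T)))
    (cbar : EuclideanSpace ℝ (Fin m)) :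
    (∀ w, regCost T m K yd α γ κ (vbar, cbar) ≤ regCost T m K yd α γ κ w) ↔
      ((∀ i, ∀ᵐ s ∂(volume.restrict (Set.Ioo 0 T)),
          vbar s i =
            max 0 (-(1 / γ) * (Kstar (K (vbar, cbar) - yd)).1 s i - α i / γ)
              + min 0 (-(1 / γ) * (Kstar (K (vbar, cbar) - yd)).1 s i + α i / γ)) ∧
        (Kstar (K (vbar, cbar) - yd)).2 + κ • cbar = 0) := by
  have hα' : ∀ i, 0 ≤ α i := fun i => (hα i).le
  have hfirst := forall_half_norm_sub_sq_add_le_iff K.toLinearMap yd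
    (convexOn_regularizer hα' hγ.le hκ) (vbar, cbar)
  simp only [ContinuousLinearMap.coe_coe] at hfirst
  simp only [regCost_eq]
  rw [hfirst]
  set r := K (vbar, cbar) - yd
  have hsplit : ∀ z, ⟪K z, r⟫ + regularizer α γ κ z
      = proxObjective γ α (Kstar r).1 z.1 + (⟪z.2, (Kstar r).2⟫ + κ / 2 * ‖z.2‖ ^ 2) := by
    intro z
    rw [hadj, regularizer, proxObjective]
    ring
  simp only [hsplit]
  rw [forall_add_le_add_prod_iff (proxObjective γ α (Kstar r).1)
      (fun c => ⟪c, (Kstar r).2⟫ + κ / 2 * ‖c‖ ^ 2), forall_proxObjective_le_iff hγ hα',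
    forall_inner_add_norm_sq_le_iff hκ, ae_all_iff]
  rfl

/-- First-order necessary and sufficient optimality conditions for the regularized problem
(P̃_γ): `(v̄,c̄)` is a minimizer iff the soft-thresholding formula (1) and the stationarity
condition (2) hold for the adjoint quantity `(𝔭,q) = K*(K(v̄,c̄) − y_d)`. -/
theorem regularized_first_order_conditions
    (T : ℝ) (hT : 0 < T) (m : ℕ) (hm : 1 ≤ m)
    {H : Type*} [NormedAddCommGroup H] [InnerProductSpace ℝ H] [CompleteSpace H]
    (K : (Lp (EuclideanSpace ℝ (Fin m)) 2 (volume.restrict (Set.Ioo 0 T)) ×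
      EuclideanSpace ℝ (Fin m)) →L[ℝ] H)
    (Kstar : H →L[ℝ] (Lp (EuclideanSpace ℝ (Fin m)) 2 (volume.restrict (Set.Ioo 0 T)) ×
      EuclideanSpace ℝ (Fin m)))
    (hadj : ∀ z w, ⟪K z, w⟫ = ⟪z.1, (Kstar w).1⟫ + ⟪z.2, (Kstar w).2⟫)
    (yd : H) (α : Fin m → ℝ) (hα : ∀ i, 0 < α i)
    (γ κ : ℝ) (hγ : 0 < γ) (hκ : 0 ≤ κ)
    (vbar : Lp (EuclideanSpace ℝ (Fin m)) 2 (volume.restrict (Set.Ioo 0 T)))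
    (cbar : EuclideanSpace ℝ (Fin m)) :
    (∀ w, regCost T m K yd α γ κ (vbar, cbar) ≤ regCost T m K yd α γ κ w) ↔
      ((∀ i, ∀ᵐ s ∂(volume.restrict (Set.Ioo 0 T)),
          vbar s i =
            max 0 (-(1 / γ) * (Kstar (K (vbar, cbar) - yd)).1 s i - α i / γ)
              + min 0 (-(1 / γ) * (Kstar (K (vbar, cbar) - yd)).1 s i + α i / γ)) ∧
        (Kstar (K (vbar, cbar) - yd)).2 + κ • cbar = 0) :=
  regularized_first_order_conditions_general T m K Kstar hadj yd α hα γ κ hγ hκ vbar cbar
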